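/- arXiv:2306.13258 — 2 statements merged into one kernel-verified Lean document; each statement's English description precedes it below -/
import Mathlib

section
/- Let G be a simple graph, k a positive integer, and P a k-plex of G with |P| ≥ 2k - 1. Then the induced subgraph G[P] is connected. -/
open scoped Classical

/-- A `k`-plex of a simple graph `G` is a finite vertex set `P` such that every
vertex `v ∈ P` has at least `|P| - k` neighbors inside `P`. -/
def IsKPlex {V : Type*} (G : SimpleGraph V) (k : ℕ) (P : Finset V) : Prop :=
  ∀ v ∈ P, P.card - k ≤ (P.filter (fun u => G.Adj v u)).card

/-!
Two distinct non-adjacent vertices `a, b` of a `k`-plex `P` have all their neighbours in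
`P \ {a, b}`, and each has at least `|P| - k` of them. Since `2 (|P| - k) > |P| - 2` exactly when
`|P| ≥ 2k - 1`, pigeonhole gives them a common neighbour, so `G[P]` has diameter at most two.
-/

open Finset

namespace SimpleGraph

variable {V : Type*} {G : SimpleGraph V}

lemma filter_adj_subset_erase_erase {P : Finset V} {a b : V} [DecidablePred (G.Adj a)]
    [DecidableEq V] (hab : ¬ G.Adj a b) : P.filter (G.Adj a) ⊆ (P.erase a).erase b := by
  intro x hx
  obtain ⟨hxP, hax⟩ := mem_filter.mp hx
  exact mem_erase.mpr ⟨by rintro rfl; exact hab hax, mem_erase.mpr ⟨hax.ne', hxP⟩⟩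

lemma exists_common_adj_of_card_lt {P : Finset V} {a b : V} [DecidablePred (G.Adj a)]
    [DecidablePred (G.Adj b)] (ha : a ∈ P) (hb : b ∈ P) (hne : a ≠ b) (hab : ¬ G.Adj a b)
    (hcard : #P < #(P.filter (G.Adj a)) + #(P.filter (G.Adj b)) + 2) :
    ∃ w ∈ P, G.Adj a w ∧ G.Adj b w := by
  have hcard_erase : #((P.erase a).erase b) + 2 = #P := by
    rw [card_erase_of_mem (mem_erase.mpr ⟨hne.symm, hb⟩), card_erase_of_mem ha]
    have : 2 ≤ #P := one_lt_card.mpr ⟨a, ha, b, hb, hne⟩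
    omega
  have hb_sub : P.filter (G.Adj b) ⊆ (P.erase a).erase b := by
    rw [erase_right_comm]
    exact filter_adj_subset_erase_erase fun h ↦ hab h.symm
  obtain ⟨w, hw⟩ := inter_nonempty_of_card_lt_card_add_card
    (filter_adj_subset_erase_erase hab) hb_sub (by omega)
  obtain ⟨hwa, hwb⟩ := mem_inter.mp hw
  exact ⟨w, (mem_filter.mp hwa).1, (mem_filter.mp hwa).2, (mem_filter.mp hwb).2⟩

lemma induce_connected_of_exists_common_adj {s : Set V} (hs : s.Nonempty)
    (h : ∀ a ∈ s, ∀ b ∈ s, a ≠ b → ¬ G.Adj a b → ∃ w ∈ s, G.Adj a w ∧ G.Adj b w) :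
    (G.induce s).Connected := by
  have : Nonempty s := hs.to_subtype
  refine .mk fun ⟨a, ha⟩ ⟨b, hb⟩ ↦ ?_
  by_cases hne : a = b
  · subst hne; rfl
  by_cases hab : G.Adj a b
  · exact (show (G.induce s).Adj ⟨a, ha⟩ ⟨b, hb⟩ from hab).reachable
  obtain ⟨w, hw, haw, hbw⟩ := h a ha b hb hne hab
  exact (show (G.induce s).Adj ⟨a, ha⟩ ⟨w, hw⟩ from haw).reachable.trans
    (show (G.induce s).Adj ⟨w, hw⟩ ⟨b, hb⟩ from hbw.symm).reachable

end SimpleGraph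

open SimpleGraph

lemma IsKPlex.exists_common_adj {V : Type*} {G : SimpleGraph V} {k : ℕ} {P : Finset V}
    (hP : IsKPlex G k P) (hcard : 2 * k - 1 ≤ #P) {a b : V} (ha : a ∈ P) (hb : b ∈ P)
    (hne : a ≠ b) (hab : ¬ G.Adj a b) : ∃ w ∈ P, G.Adj a w ∧ G.Adj b w :=
  exists_common_adj_of_card_lt ha hb hne hab (by
    have hPa : #P - k ≤ #(P.filter (G.Adj a)) := hP a ha
    have hPb : #P - k ≤ #(P.filter (G.Adj b)) := hP b hb
    omega)

/-- If `P` is a `k`-plex with `|P| ≥ 2k - 1`, then the induced subgraph `G[P]`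
is connected. -/
theorem kplex_induce_connected {V : Type*} (G : SimpleGraph V)
    (k : ℕ) (hk : 0 < k) (P : Finset V) (hP : IsKPlex G k P)
    (hcard : 2 * k - 1 ≤ P.card) :
    (G.induce (↑P : Set V)).Connected :=
  induce_connected_of_exists_common_adj (coe_nonempty.mpr (card_pos.mp (by omega)))
    fun _ ha _ hb hne hab ↦ hP.exists_common_adj hcard ha hb hne hab
end

section
/- Let G be a simple graph and c a nonnegative integer such that every nonempty set F of edges of G contains an edge e = {u, v} whose endpoints have at most c common neighbors w with {u, w} ∈ F and {v, w} ∈ F (i.e., G is c-community-degenerate). Then for every positive integer k, every k-plex P of G with |P| ≥ 2k - 1 satisfies |P| ≤ c + 2k. -/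
/-!
Apply community degeneracy to the edges of `G` inside `P` (nonempty once `|P| > 2k`): it yields
an edge `uv` of `P` with at most `c` common neighbours in `P`. Every vertex of `P` outside this
common neighbourhood is a non-neighbour of `u` or of `v`, and in a `k`-plex each vertex has at
most `k` non-neighbours in `P` (itself included), so `|P| ≤ c + 2k`.
-/

open scoped Classical

namespace SimpleGraph

variable {V : Type*} (G : SimpleGraph V) [Fintype G.edgeSet]

noncomputable def edgeFinsetWithin (P : Finset V) : Finset (Sym2 V) :=
  G.edgeFinset.filter fun e => ∀ x ∈ e, x ∈ P

variable {G}

theorem edgeFinsetWithin_subset (P : Finset V) : G.edgeFinsetWithin P ⊆ G.edgeFinset :=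
  Finset.filter_subset _ _

@[simp]
theorem mk_mem_edgeFinsetWithin {P : Finset V} {a b : V} :
    s(a, b) ∈ G.edgeFinsetWithin P ↔ G.Adj a b ∧ a ∈ P ∧ b ∈ P := by
  simp [edgeFinsetWithin]

end SimpleGraph

namespace IsKPlex

variable {V : Type*} {G : SimpleGraph V} {k : ℕ} {P : Finset V}

theorem card_filter_not_adj_le (hP : IsKPlex G k P) {v : V} (hv : v ∈ P) :
    (P.filter fun w => ¬G.Adj v w).card ≤ k := by
  have hsplit := Finset.card_filter_add_card_filter_not (s := P) (fun w => G.Adj v w)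
  have := hP v hv
  omega

theorem exists_adj_of_lt_card (hP : IsKPlex G k P) (hk : k < P.card) {v : V} (hv : v ∈ P) :
    ∃ u ∈ P, G.Adj v u := by
  have hpos : 0 < (P.filter fun u => G.Adj v u).card := by
    have := hP v hv
    omega
  obtain ⟨u, hu⟩ := Finset.card_pos.mp hpos
  exact ⟨u, (Finset.mem_filter.mp hu).1, (Finset.mem_filter.mp hu).2⟩

theorem card_le_card_commonNeighbors_add (hP : IsKPlex G k P) {u v : V} (hu : u ∈ P)
    (hv : v ∈ P) :
    P.card ≤ (P.filter fun w => G.Adj u w ∧ G.Adj v w).card + 2 * k := by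
  have hcover : P ⊆ (P.filter fun w => G.Adj u w ∧ G.Adj v w) ∪
      ((P.filter fun w => ¬G.Adj u w) ∪ P.filter fun w => ¬G.Adj v w) := by
    intro w hw
    simp only [Finset.mem_union, Finset.mem_filter]
    tauto
  calc P.card
      ≤ (P.filter fun w => G.Adj u w ∧ G.Adj v w).card +
          ((P.filter fun w => ¬G.Adj u w).card + (P.filter fun w => ¬G.Adj v w).card) :=
        (Finset.card_le_card hcover).trans <|
          (Finset.card_union_le _ _).trans (Nat.add_le_add_left (Finset.card_union_le _ _) _)
    _ ≤ _ := by
        have := hP.card_filter_not_adj_le hu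
        have := hP.card_filter_not_adj_le hv
        omega

end IsKPlex

/-- If `G` is `c`-community-degenerate (every nonempty finite set `F` of edges of `G`
contains an edge `{u, v}` such that at most `c` vertices `w` satisfy both
`{u, w} ∈ F` and `{v, w} ∈ F`), then for every positive integer `k`, every `k`-plex
`P` of `G` with `|P| ≥ 2k - 1` satisfies `|P| ≤ c + 2k`. -/
theorem kplex_card_le_community_degeneracy_add_two_k {V : Type*} [Fintype V]
    (G : SimpleGraph V) (c : ℕ)
    (hcd : ∀ F : Finset (Sym2 V), F ⊆ G.edgeFinset → F.Nonempty →
      ∃ u v : V, s(u, v) ∈ F ∧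
        (Finset.univ.filter (fun w => s(u, w) ∈ F ∧ s(v, w) ∈ F)).card ≤ c) :
    ∀ k : ℕ, 0 < k → ∀ P : Finset V, IsKPlex G k P → 2 * k - 1 ≤ P.card →
      P.card ≤ c + 2 * k := by
  intro k _ P hP _
  by_cases hsmall : P.card ≤ 2 * k
  · omega
  set F := G.edgeFinsetWithin P
  have hFne : F.Nonempty := by
    obtain ⟨v, hv⟩ : P.Nonempty := Finset.card_pos.mp (by omega)
    obtain ⟨u, hu, hvu⟩ := hP.exists_adj_of_lt_card (by omega) hv
    exact ⟨s(v, u), SimpleGraph.mk_mem_edgeFinsetWithin.mpr ⟨hvu, hv, hu⟩⟩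
  obtain ⟨u, v, huv, hc⟩ := hcd F (SimpleGraph.edgeFinsetWithin_subset P) hFne
  obtain ⟨-, hu, hv⟩ := SimpleGraph.mk_mem_edgeFinsetWithin.mp huv
  have hcommon : (P.filter fun w => G.Adj u w ∧ G.Adj v w).card ≤ c := by
    refine (Finset.card_le_card fun w hw => ?_).trans hc
    simp only [Finset.mem_filter] at hw
    simp [F, hu, hv, hw]
  have := hP.card_le_card_commonNeighbors_add hu hv
  omega
end
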